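/- Fix λ > 1, y > 0, d ∈ ℝ, and let x₀ ∈ (|d|/y, ∞) be the unique solution of the criticality equation L + M y²/√(x²y²−d²) = 2√(A(x,y,d)). Then for all ξ with ξ ≥ x₀ one has L + M y²/√(ξ²y²−d²) ≤ 2√(A(ξ,y,d)) (equivalently ∂g/∂x(ξ,y,d) ≥ 0), and for all ξ ∈ (|d|/y, x₀) one has L + M y²/√(ξ²y²−d²) > 2√(A(ξ,y,d)) (equivalently ∂g/∂x(ξ,y,d) < 0). -/
import Mathlib


noncomputable section

def Afun (l x y d : ℝ) : ℝ :=
  (x ^ 2 + y ^ 2) * (l ^ 2 + 1 / l ^ 2) / 2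
    + (l ^ 2 - 1 / l ^ 2) * Real.sqrt (x ^ 2 * y ^ 2 - d ^ 2) + 2 * d

lemma crit_pos_sub (y d x : ℝ) (hy : 0 < y) (hx : |d| / y < x) :
    0 < x ^ 2 * y ^ 2 - d ^ 2 := by
  have hx0 : 0 < x := lt_of_le_of_lt (div_nonneg (abs_nonneg d) hy.le) hx
  have h1 : |d| < x * y := (div_lt_iff₀ hy).mp hx
  nlinarith [abs_nonneg d, sq_abs d]

lemma crit_cont (l y d : ℝ) (hy : 0 < y) :
    ContinuousOn (fun x => 2 * Real.sqrt (Afun l x y d)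
      - ((l ^ 2 + 1 / l ^ 2)
        + (l ^ 2 - 1 / l ^ 2) * y ^ 2 / Real.sqrt (x ^ 2 * y ^ 2 - d ^ 2)))
      {x | |d| / y < x} := by
  apply ContinuousOn.sub
  · apply Continuous.continuousOn
    apply Continuous.mul continuous_const
    apply Real.continuous_sqrt.comp
    unfold Afun
    fun_prop
  · apply ContinuousOn.add continuousOn_const
    apply ContinuousOn.div continuousOn_const
    · exact (Real.continuous_sqrt.comp (by fun_prop)).continuousOn
    · intro x hx
      exact ne_of_gt (Real.sqrt_pos.mpr (crit_pos_sub y d x hy hx))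

lemma crit_large (l : ℝ) (hl : 1 < l) (y d : ℝ) (hy : 0 < y) (ξ : ℝ) :
    ∃ t, ξ ≤ t ∧ |d| / y < t ∧
      (l ^ 2 + 1 / l ^ 2) + (l ^ 2 - 1 / l ^ 2) * y ^ 2 / Real.sqrt (t ^ 2 * y ^ 2 - d ^ 2)
        < 2 * Real.sqrt (Afun l t y d) := by
  set L := l ^ 2 + 1 / l ^ 2 with hLdef
  set M := l ^ 2 - 1 / l ^ 2 with hMdef
  have hl0 : 0 < l := lt_trans one_pos hl
  have hl2 : 1 < l ^ 2 := by nlinarith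
  have hM : 0 < M := by
    have : 1 / l ^ 2 < 1 := by rw [div_lt_one (by positivity)]; exact hl2
    simp only [hMdef]; linarith
  have hL : 2 ≤ L := by
    have h1 : 0 < 1 / l ^ 2 := by positivity
    have : (l ^ 2 - 1) * (1 - 1 / l ^ 2) ≥ 0 := by
      apply mul_nonneg (by linarith)
      rw [sub_nonneg, div_le_one (by positivity)]; linarith
    have hml : l ^ 2 * (1 / l ^ 2) = 1 := by field_simp
    simp only [hLdef]; nlinarith
  set C := L + M * y ^ 2 with hCdef
  have hC : 0 < C := by positivity
  set K := (C ^ 2 / 4 + 1 + 2 * |d|) * 2 / L + 1 with hKdef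
  set t := max ξ (max ((|d| + 1) / y) (max K 1)) with htdef
  have ht1 : ξ ≤ t := le_max_left _ _
  have hty : (|d| + 1) / y ≤ t := le_trans (le_max_left _ _) (le_max_right _ _)
  have htK : K ≤ t := le_trans (le_max_left _ _) (le_trans (le_max_right _ _) (le_max_right _ _))
  have ht11 : (1:ℝ) ≤ t := le_trans (le_max_right _ _) (le_trans (le_max_right _ _) (le_max_right _ _))
  have ht0 : 0 < t := lt_of_lt_of_le one_pos ht11
  have htyabs : |d| + 1 ≤ t * y := (div_le_iff₀ hy).mp hty
  have hs1 : 1 ≤ t ^ 2 * y ^ 2 - d ^ 2 := by nlinarith [abs_nonneg d, sq_abs d]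
  have hda : |d| / y < t := by
    apply (div_lt_iff₀ hy).mpr
    nlinarith [abs_nonneg d]
  refine ⟨t, ht1, hda, ?_⟩
  have hsq1 : 1 ≤ Real.sqrt (t ^ 2 * y ^ 2 - d ^ 2) := by
    rw [show (1:ℝ) = Real.sqrt 1 by simp]
    exact Real.sqrt_le_sqrt hs1
  have hterm : M * y ^ 2 / Real.sqrt (t ^ 2 * y ^ 2 - d ^ 2) ≤ M * y ^ 2 := by
    rw [div_le_iff₀ (by linarith)]
    nlinarith [mul_nonneg hM.le (sq_nonneg y)]
  -- A is large
  have hA : C ^ 2 / 4 + 1 ≤ Afun l t y d := by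
    have hKle : C ^ 2 / 4 + 1 + 2 * |d| ≤ t ^ 2 * L / 2 := by
      have ht2 : K ≤ t ^ 2 := le_trans htK (by nlinarith)
      have hKge : (C ^ 2 / 4 + 1 + 2 * |d|) * 2 / L ≤ K := by simp [hKdef]
      have := le_trans hKge ht2
      rw [div_le_iff₀ (by linarith)] at this
      linarith
    have hsn : 0 ≤ Real.sqrt (t ^ 2 * y ^ 2 - d ^ 2) := Real.sqrt_nonneg _
    have : -(2 * |d|) ≤ 2 * d := by
      have := neg_abs_le d; linarith
    have hy2L : 0 ≤ y ^ 2 * L := mul_nonneg (sq_nonneg y) (by linarith)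
    have hMs : 0 ≤ M * Real.sqrt (t ^ 2 * y ^ 2 - d ^ 2) := mul_nonneg hM.le hsn
    unfold Afun
    simp only [← hLdef, ← hMdef]
    clear hterm hsq1 hda hs1 htyabs ht0 ht11 htK hty ht1 htdef hKdef hCdef
    clear hLdef hMdef
    clear_value t K C L M
    linarith
  have hsqA : C / 2 < Real.sqrt (Afun l t y d) := by
    have h1 : Real.sqrt (C ^ 2 / 4) < Real.sqrt (C ^ 2 / 4 + 1) := by
      apply Real.sqrt_lt_sqrt (by positivity); linarith
    have h2 : Real.sqrt (C ^ 2 / 4) = C / 2 := by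
      rw [show C ^ 2 / 4 = (C / 2) ^ 2 by ring, Real.sqrt_sq (by positivity)]
    calc C / 2 < Real.sqrt (C ^ 2 / 4 + 1) := by rw [← h2]; exact h1
      _ ≤ Real.sqrt (Afun l t y d) := Real.sqrt_le_sqrt hA
  calc L + M * y ^ 2 / Real.sqrt (t ^ 2 * y ^ 2 - d ^ 2) ≤ C := by
        simp only [hCdef]; linarith
    _ < 2 * Real.sqrt (Afun l t y d) := by linarith

set_option maxHeartbeats 1000000 in
lemma crit_small (l : ℝ) (hl : 1 < l) (y d : ℝ) (hy : 0 < y) (ξ : ℝ) (hξ : |d| / y < ξ) :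
    ∃ t, |d| / y < t ∧ t < ξ ∧
      2 * Real.sqrt (Afun l t y d)
        < (l ^ 2 + 1 / l ^ 2) + (l ^ 2 - 1 / l ^ 2) * y ^ 2 / Real.sqrt (t ^ 2 * y ^ 2 - d ^ 2) := by
  obtain ⟨L, hLdef⟩ : ∃ L : ℝ, L = l ^ 2 + 1 / l ^ 2 := ⟨_, rfl⟩
  obtain ⟨M, hMdef⟩ : ∃ M : ℝ, M = l ^ 2 - 1 / l ^ 2 := ⟨_, rfl⟩
  rw [← hLdef, ← hMdef]
  have hl0 : 0 < l := lt_trans one_pos hl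
  have hl2 : 1 < l ^ 2 := by nlinarith
  have hM : 0 < M := by
    have : 1 / l ^ 2 < 1 := by rw [div_lt_one (by positivity)]; exact hl2
    rw [hMdef]; linarith
  have hL : 2 ≤ L := by
    have h1 : 0 < 1 / l ^ 2 := by positivity
    have hml : l ^ 2 * (1 / l ^ 2) = 1 := by field_simp
    have h2 : (l ^ 2 - 1) * (1 - 1 / l ^ 2) ≥ 0 := by
      apply mul_nonneg (by linarith)
      rw [sub_nonneg, div_le_one (by positivity)]; linarith
    rw [hLdef]; nlinarith
  have ha0 : 0 ≤ |d| / y := div_nonneg (abs_nonneg d) hy.le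
  have hξ0 : 0 < ξ := lt_of_le_of_lt ha0 hξ
  obtain ⟨B, hBdef⟩ : ∃ B : ℝ, B = (ξ ^ 2 + y ^ 2) * L / 2 + M * (ξ * y) + 2 * |d| := ⟨_, rfl⟩
  have hB0 : 0 ≤ B := by
    have h1 : 0 ≤ (ξ ^ 2 + y ^ 2) * L := mul_nonneg (by positivity) (by linarith)
    have h2 : 0 ≤ M * (ξ * y) := mul_nonneg hM.le (by positivity)
    rw [hBdef]; positivity
  have hsB : 0 ≤ Real.sqrt B := Real.sqrt_nonneg B
  obtain ⟨ε, hεdef⟩ : ∃ ε : ℝ, ε = M * y ^ 2 / (2 * Real.sqrt B + 1) := ⟨_, rfl⟩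
  have hε : 0 < ε := by rw [hεdef]; exact div_pos (by positivity) (by linarith)
  obtain ⟨δ, hδdef⟩ :
      ∃ δ : ℝ, δ = min ((ξ - |d| / y) / 2) (min 1 (ε ^ 2 / (2 * |d| * y + y ^ 2))) := ⟨_, rfl⟩
  have hdy : 0 < 2 * |d| * y + y ^ 2 := by nlinarith [abs_nonneg d]
  have hδ0 : 0 < δ := by
    rw [hδdef]
    exact lt_min (by linarith) (lt_min one_pos (div_pos (by positivity) hdy))
  have hδ1 : δ ≤ 1 := by
    rw [hδdef]; exact le_trans (min_le_right _ _) (min_le_left _ _)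
  have hδhalf : δ ≤ (ξ - |d| / y) / 2 := by rw [hδdef]; exact min_le_left _ _
  have hδε : δ * (2 * |d| * y + y ^ 2) ≤ ε ^ 2 := by
    have h1 : δ ≤ ε ^ 2 / (2 * |d| * y + y ^ 2) := by
      rw [hδdef]; exact le_trans (min_le_right _ _) (min_le_right _ _)
    calc δ * (2 * |d| * y + y ^ 2)
        ≤ ε ^ 2 / (2 * |d| * y + y ^ 2) * (2 * |d| * y + y ^ 2) :=
          mul_le_mul_of_nonneg_right h1 hdy.le
      _ = ε ^ 2 := by field_simp
  clear hδdef
  obtain ⟨t, htdef⟩ : ∃ t : ℝ, t = |d| / y + δ := ⟨_, rfl⟩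
  have hta : |d| / y < t := by rw [htdef]; linarith
  have htξ : t < ξ := by rw [htdef]; linarith
  have ht0 : 0 < t := lt_of_le_of_lt ha0 hta
  have hty : t * y = |d| + δ * y := by rw [htdef]; field_simp
  have hs2 : t ^ 2 * y ^ 2 - d ^ 2 = 2 * |d| * δ * y + δ ^ 2 * y ^ 2 := by
    have h1 : t ^ 2 * y ^ 2 = (t * y) ^ 2 := by ring
    rw [h1, hty, ← sq_abs d]; ring
  have hs2pos : 0 < t ^ 2 * y ^ 2 - d ^ 2 := by
    rw [hs2]
    have h1 : 0 < δ ^ 2 * y ^ 2 := by positivity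
    have h2 : 0 ≤ 2 * |d| * δ * y := by positivity
    linarith
  have hs2le : t ^ 2 * y ^ 2 - d ^ 2 ≤ ε ^ 2 := by
    rw [hs2]
    have hd2 : δ ^ 2 * y ^ 2 ≤ δ * y ^ 2 := by
      nlinarith [mul_nonneg (sub_nonneg.mpr hδ1) (mul_nonneg hδ0.le (sq_nonneg y))]
    nlinarith [hδε]
  clear htdef hty hs2
  obtain ⟨s, hsdef⟩ : ∃ s : ℝ, s = Real.sqrt (t ^ 2 * y ^ 2 - d ^ 2) := ⟨_, rfl⟩
  have hs0 : 0 < s := by rw [hsdef]; exact Real.sqrt_pos.mpr hs2pos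
  have hsε : s ≤ ε := by
    rw [hsdef, show ε = Real.sqrt (ε ^ 2) from (Real.sqrt_sq hε.le).symm]
    exact Real.sqrt_le_sqrt hs2le
  have hAB : Afun l t y d ≤ B := by
    have hsty : s ≤ ξ * y := by
      rw [hsdef]
      calc Real.sqrt (t ^ 2 * y ^ 2 - d ^ 2) ≤ Real.sqrt (t ^ 2 * y ^ 2) := by
            apply Real.sqrt_le_sqrt; linarith [sq_nonneg d]
        _ = t * y := by
            rw [show t ^ 2 * y ^ 2 = (t * y) ^ 2 by ring]
            exact Real.sqrt_sq (by positivity)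
        _ ≤ ξ * y := mul_le_mul_of_nonneg_right htξ.le hy.le
    have ht2 : t ^ 2 ≤ ξ ^ 2 := by nlinarith [mul_le_mul_of_nonneg_right htξ.le ht0.le, mul_le_mul_of_nonneg_right htξ.le hξ0.le]
    have hMs : M * s ≤ M * (ξ * y) := mul_le_mul_of_nonneg_left hsty hM.le
    have hdd : 2 * d ≤ 2 * |d| := by have := le_abs_self d; linarith
    have hLmul : (t ^ 2 + y ^ 2) * L ≤ (ξ ^ 2 + y ^ 2) * L :=
      mul_le_mul_of_nonneg_right (by linarith) (by linarith)
    unfold Afun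
    rw [hBdef, ← hsdef, ← hLdef, ← hMdef]
    linarith
  have hsqAB : Real.sqrt (Afun l t y d) ≤ Real.sqrt B := Real.sqrt_le_sqrt hAB
  have hdivge : 2 * Real.sqrt B + 1 ≤ M * y ^ 2 / s := by
    have h1 : M * y ^ 2 / ε ≤ M * y ^ 2 / s :=
      div_le_div_of_nonneg_left (by positivity) hs0 hsε
    have h2 : M * y ^ 2 / ε = 2 * Real.sqrt B + 1 := by
      rw [hεdef]; field_simp
    linarith
  refine ⟨t, hta, htξ, ?_⟩
  rw [← hsdef]
  calc 2 * Real.sqrt (Afun l t y d) ≤ 2 * Real.sqrt B := by linarith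
    _ < L + (2 * Real.sqrt B + 1) := by linarith
    _ ≤ L + M * y ^ 2 / s := by linarith


/-- Let `x₀ ∈ (|d|/y, ∞)` be the (unique) solution of the criticality equation.
Then for all `ξ ≥ x₀` one has `L + M y²/√(ξ²y²−d²) ≤ 2√(A(ξ,y,d))`
(i.e. `∂g/∂x(ξ,y,d) ≥ 0`), and for all `ξ ∈ (|d|/y, x₀)` the strict reverse
inequality holds (i.e. `∂g/∂x(ξ,y,d) < 0`). -/
theorem criticality_sign (l : ℝ) (hl : 1 < l) (y d : ℝ) (hy : 0 < y) (x₀ : ℝ)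
    (hx₀ : |d| / y < x₀)
    (heq : (l ^ 2 + 1 / l ^ 2)
        + (l ^ 2 - 1 / l ^ 2) * y ^ 2 / Real.sqrt (x₀ ^ 2 * y ^ 2 - d ^ 2)
        = 2 * Real.sqrt (Afun l x₀ y d))
    (huniq : ∀ x : ℝ, |d| / y < x →
      (l ^ 2 + 1 / l ^ 2)
          + (l ^ 2 - 1 / l ^ 2) * y ^ 2 / Real.sqrt (x ^ 2 * y ^ 2 - d ^ 2)
          = 2 * Real.sqrt (Afun l x y d) → x = x₀) :
    (∀ ξ : ℝ, x₀ ≤ ξ →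
      (l ^ 2 + 1 / l ^ 2)
          + (l ^ 2 - 1 / l ^ 2) * y ^ 2 / Real.sqrt (ξ ^ 2 * y ^ 2 - d ^ 2)
        ≤ 2 * Real.sqrt (Afun l ξ y d)) ∧
    (∀ ξ : ℝ, |d| / y < ξ → ξ < x₀ →
      2 * Real.sqrt (Afun l ξ y d)
        < (l ^ 2 + 1 / l ^ 2)
            + (l ^ 2 - 1 / l ^ 2) * y ^ 2 / Real.sqrt (ξ ^ 2 * y ^ 2 - d ^ 2)) := by
  have hcont := crit_cont l y d hy
  set f : ℝ → ℝ := fun x => 2 * Real.sqrt (Afun l x y d)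
      - ((l ^ 2 + 1 / l ^ 2)
        + (l ^ 2 - 1 / l ^ 2) * y ^ 2 / Real.sqrt (x ^ 2 * y ^ 2 - d ^ 2)) with hfdef
  constructor
  · intro ξ hξ
    rcases eq_or_lt_of_le hξ with h | h
    · rw [← h]; exact le_of_eq heq
    · by_contra hcon
      push_neg at hcon
      obtain ⟨t, htξ, hta, hth⟩ := crit_large l hl y d hy ξ
      have hsub : Set.Icc ξ t ⊆ {x | |d| / y < x} := fun z hz =>
        lt_of_lt_of_le (lt_trans hx₀ h) hz.1
      have hc0 : ContinuousOn f (Set.Icc ξ t) := hcont.mono hsub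
      have hfξ : f ξ ≤ 0 := by simp only [hfdef]; linarith
      have hft : 0 ≤ f t := by simp only [hfdef]; linarith
      obtain ⟨c, hcmem, hfc⟩ := intermediate_value_Icc htξ hc0 ⟨hfξ, hft⟩
      have hcd : |d| / y < c := hsub hcmem
      have hceq := huniq c hcd (sub_eq_zero.mp hfc).symm
      have := hcmem.1
      linarith [hcmem.1, h, hceq ▸ hcmem.1]
  · intro ξ ha hb
    by_contra hcon
    push_neg at hcon
    obtain ⟨t, hta, htξ, hth⟩ := crit_small l hl y d hy ξ ha
    have hsub : Set.Icc t ξ ⊆ {x | |d| / y < x} := fun z hz => lt_of_lt_of_le hta hz.1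
    have hc0 : ContinuousOn f (Set.Icc t ξ) := hcont.mono hsub
    have hft : f t ≤ 0 := by simp only [hfdef]; linarith
    have hfξ : 0 ≤ f ξ := by simp only [hfdef]; linarith
    obtain ⟨c, hcmem, hfc⟩ := intermediate_value_Icc htξ.le hc0 ⟨hft, hfξ⟩
    have hcd : |d| / y < c := hsub hcmem
    have hceq := huniq c hcd (sub_eq_zero.mp hfc).symm
    linarith [hcmem.2, hceq ▸ hcmem.2]
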